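/- Let A₀, A₁, h₀, h₁ be real polynomials in one variable and g₀, g₁ real polynomials in two variables. Let I ⊆ ℝ be an open interval containing 0 on which A₁(x) ≠ 0 and h₁(x) ≠ 0; set A(x) = A₀(x)/A₁(x), h(x) = h₀(x)/h₁(x), Φ(x) = exp(−∫₀ˣ A(s) ds)·∫₀ˣ exp(∫₀ˢ A(r) dr) h(s) ds. Define Pₗ(x,y) = A₁(x)·h₁(x)·(g₁·∂g₀/∂y − g₀·∂g₁/∂y) and Qₗ(x,y) = A₁(x)·h₀(x)·g₁² − A₀(x)·h₁(x)·g₀·g₁ − A₁(x)·h₁(x)·(g₁·∂g₀/∂x − g₀·∂g₁/∂x). Let C ≠ 0, w(x) = C·exp(−∫₀ˣ A(s) ds), f(x,y) = g₁·w(x) − g₀ + g₁·Φ(x), and q(x,y) = g₁(x,y)·exp(−∫₀ˣ A(s) ds). Then the function H(x,y) = f(x,y)/q(x,y) satisfies Pₗ·∂H/∂x + Qₗ·∂H/∂y = 0 at every point (x,y) with x ∈ I and q(x,y) ≠ 0. -/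

import Mathlib

/-- Evaluation of a polynomial in two variables at `(x, y)`. -/
noncomputable def ev2 (p : MvPolynomial (Fin 2) ℝ) (x y : ℝ) : ℝ :=
  MvPolynomial.eval ![x, y] p

/-- Partial derivative with respect to the first variable. -/
noncomputable def pdX (p : MvPolynomial (Fin 2) ℝ) : MvPolynomial (Fin 2) ℝ :=
  MvPolynomial.pderiv (0 : Fin 2) p

/-- Partial derivative with respect to the second variable. -/
noncomputable def pdY (p : MvPolynomial (Fin 2) ℝ) : MvPolynomial (Fin 2) ℝ :=
  MvPolynomial.pderiv (1 : Fin 2) p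


/-- The rational function `A(x) = A₀(x)/A₁(x)`. -/
noncomputable def Afun (A₀ A₁ : Polynomial ℝ) (x : ℝ) : ℝ := A₀.eval x / A₁.eval x

/-- The rational function `h(x) = h₀(x)/h₁(x)`. -/
noncomputable def hfun (h₀ h₁ : Polynomial ℝ) (x : ℝ) : ℝ := h₀.eval x / h₁.eval x

/-- `Φ(x) = exp(−∫₀ˣ A) ∫₀ˣ exp(∫₀ˢ A) h(s) ds`. -/
noncomputable def Phi (A₀ A₁ h₀ h₁ : Polynomial ℝ) (x : ℝ) : ℝ :=
  Real.exp (-(∫ s in (0:ℝ)..x, Afun A₀ A₁ s)) *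
    ∫ s in (0:ℝ)..x, Real.exp (∫ r in (0:ℝ)..s, Afun A₀ A₁ r) * hfun h₀ h₁ s

/-- `Pₗ(x,y) = A₁ h₁ (g₁ ∂g₀/∂y − g₀ ∂g₁/∂y)`. -/
noncomputable def Pl (A₁ h₁ : Polynomial ℝ) (g₀ g₁ : MvPolynomial (Fin 2) ℝ) (x y : ℝ) : ℝ :=
  A₁.eval x * h₁.eval x * (ev2 g₁ x y * ev2 (pdY g₀) x y - ev2 g₀ x y * ev2 (pdY g₁) x y)

/-- `Qₗ(x,y) = A₁ h₀ g₁² − A₀ h₁ g₀ g₁ − A₁ h₁ (g₁ ∂g₀/∂x − g₀ ∂g₁/∂x)`. -/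
noncomputable def Ql (A₀ A₁ h₀ h₁ : Polynomial ℝ) (g₀ g₁ : MvPolynomial (Fin 2) ℝ)
    (x y : ℝ) : ℝ :=
  A₁.eval x * h₀.eval x * (ev2 g₁ x y) ^ 2
    - A₀.eval x * h₁.eval x * ev2 g₀ x y * ev2 g₁ x y
    - A₁.eval x * h₁.eval x * (ev2 g₁ x y * ev2 (pdX g₀) x y - ev2 g₀ x y * ev2 (pdX g₁) x y)

/-!
Write `L(x) = ∫₀ˣ A` and `J(x) = ∫₀ˣ e^{L} h`. Since `w = C e^{-L}` and `Φ = e^{-L} J`, where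
`g₁ ≠ 0` we have `H = C + J − e^{L} g₀ / g₁`, so
`∂ₓH = e^{L} (h g₁² − A g₀ g₁ − (g₁ ∂ₓg₀ − g₀ ∂ₓg₁)) / g₁²` and
`∂ᵧH = −e^{L} (g₁ ∂ᵧg₀ − g₀ ∂ᵧg₁) / g₁²`. Hence `(Pₗ, Qₗ) = λ (−∂ᵧH, ∂ₓH)` with
`λ = A₁ h₁ g₁² e^{-L}`, and `Pₗ ∂ₓH + Qₗ ∂ᵧH = 0`.
-/

open MvPolynomial in
theorem MvPolynomial.hasDerivAt_eval_update {σ : Type*} [DecidableEq σ]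
    (p : MvPolynomial σ ℝ) (v : σ → ℝ) (i : σ) (t₀ : ℝ) :
    HasDerivAt (fun t => eval (Function.update v i t) p)
      (eval (Function.update v i t₀) (pderiv i p)) t₀ := by
  induction p using MvPolynomial.induction_on with
  | C a => simpa using hasDerivAt_const t₀ a
  | add p q hp hq => simpa using hp.fun_add hq
  | mul_X p j hp =>
    simp only [map_mul, eval_X, Derivation.leibniz, pderiv_X, smul_eq_mul, map_add]
    by_cases hji : j = i
    · subst hji
      simpa using (hp.fun_mul (hasDerivAt_id' t₀)).congr_deriv (by ring)
    · simpa [Function.update_of_ne hji, Pi.single_apply, Ne.symm hji] using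
        (hp.mul_const (v j)).congr_deriv (mul_comm _ _)

theorem hasDerivAt_ev2_fst (p : MvPolynomial (Fin 2) ℝ) (x y : ℝ) :
    HasDerivAt (fun t => ev2 p t y) (ev2 (pdX p) x y) x := by
  have hupd (t : ℝ) : ![t, y] = Function.update ![x, y] 0 t := by ext j; fin_cases j <;> rfl
  simpa only [ev2, pdX, ← hupd] using MvPolynomial.hasDerivAt_eval_update p ![x, y] 0 x

theorem hasDerivAt_ev2_snd (p : MvPolynomial (Fin 2) ℝ) (x y : ℝ) :
    HasDerivAt (fun t => ev2 p x t) (ev2 (pdY p) x y) y := by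
  have hupd (t : ℝ) : ![x, t] = Function.update ![x, y] 1 t := by ext j; fin_cases j <;> rfl
  simpa only [ev2, pdY, ← hupd] using MvPolynomial.hasDerivAt_eval_update p ![x, y] 1 y

theorem ContinuousOn.hasDerivAt_intervalIntegral {E : Type*} [NormedAddCommGroup E]
    [NormedSpace ℝ E] [CompleteSpace E] {F : ℝ → E} {I : Set ℝ} {a x : ℝ}
    (hF : ContinuousOn F I) (hI : IsOpen I) (hIc : I.OrdConnected) (ha : a ∈ I) (hx : x ∈ I) :
    HasDerivAt (fun u => ∫ s in a..u, F s) (F x) x :=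
  intervalIntegral.integral_hasDerivAt_right
    ((hF.mono (hIc.uIcc_subset ha hx)).intervalIntegrable) (hF.stronglyMeasurableAtFilter hI x hx) (hF.continuousAt (hI.mem_nhds hx))

theorem hasDerivAt_firstIntegralQuotient {G₀ G₁ L J : ℝ → ℝ} {x a b G₀' G₁' : ℝ} (c : ℝ)
    (hG₀ : HasDerivAt G₀ G₀' x) (hG₁ : HasDerivAt G₁ G₁' x) (hL : HasDerivAt L a x)
    (hJ : HasDerivAt J (Real.exp (L x) * b) x) (hG₁x : G₁ x ≠ 0) :
    HasDerivAt (fun t => (G₁ t * (c * Real.exp (-L t)) - G₀ t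
        + G₁ t * (Real.exp (-L t) * J t)) / (G₁ t * Real.exp (-L t)))
      (Real.exp (L x) * (b * G₁ x ^ 2 - a * G₀ x * G₁ x - (G₁ x * G₀' - G₀ x * G₁'))
        / G₁ x ^ 2) x := by
  have hE : HasDerivAt (fun t => Real.exp (-L t)) (Real.exp (-L x) * -a) x := hL.neg.exp
  have hq : G₁ x * Real.exp (-L x) ≠ 0 := mul_ne_zero hG₁x (Real.exp_ne_zero _)
  refine ((((hG₁.fun_mul (hE.const_mul c)).fun_sub hG₀).fun_add
    (hG₁.fun_mul (hE.fun_mul hJ))).fun_div (hG₁.fun_mul hE) hq).congr_deriv ?_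
  rw [Real.exp_neg]
  field_simp
  ring

theorem stmt_8_general
    (A₀ A₁ h₀ h₁ : Polynomial ℝ) (g₀ g₁ : MvPolynomial (Fin 2) ℝ)
    (I : Set ℝ) (hIopen : IsOpen I) (hIconn : I.OrdConnected) (h0I : (0:ℝ) ∈ I)
    (hA₁ : ∀ x ∈ I, A₁.eval x ≠ 0) (hh₁ : ∀ x ∈ I, h₁.eval x ≠ 0)
    (C : ℝ)
    (w : ℝ → ℝ)
    (hw : ∀ x, w x = C * Real.exp (-(∫ s in (0:ℝ)..x, Afun A₀ A₁ s)))
    (f : ℝ → ℝ → ℝ)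
    (hf : ∀ x y, f x y = ev2 g₁ x y * w x - ev2 g₀ x y + ev2 g₁ x y * Phi A₀ A₁ h₀ h₁ x)
    (q : ℝ → ℝ → ℝ)
    (hq : ∀ x y, q x y = ev2 g₁ x y * Real.exp (-(∫ s in (0:ℝ)..x, Afun A₀ A₁ s)))
    (H : ℝ → ℝ → ℝ)
    (hH : ∀ x y, H x y = f x y / q x y) :
    ∀ x ∈ I, ∀ y : ℝ, q x y ≠ 0 →
      Pl A₁ h₁ g₀ g₁ x y * deriv (fun t => H t y) x
        + Ql A₀ A₁ h₀ h₁ g₀ g₁ x y * deriv (fun t => H x t) y = 0 := by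
  intro x hx y hqxy
  have hg₁ : ev2 g₁ x y ≠ 0 := fun h => hqxy (by rw [hq, h, zero_mul])
  have hIntA : ∀ z ∈ I, HasDerivAt (fun u => ∫ s in (0:ℝ)..u, Afun A₀ A₁ s) (Afun A₀ A₁ z) z :=
    fun z hz => (A₀.continuous.continuousOn.div A₁.continuous.continuousOn hA₁
      ).hasDerivAt_intervalIntegral hIopen hIconn h0I hz
  have hJ : HasDerivAt
      (fun u => ∫ s in (0:ℝ)..u, Real.exp (∫ r in (0:ℝ)..s, Afun A₀ A₁ r) * hfun h₀ h₁ s)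
      (Real.exp (∫ r in (0:ℝ)..x, Afun A₀ A₁ r) * hfun h₀ h₁ x) x :=
    ((Real.continuous_exp.comp_continuousOn fun z hz =>
      (hIntA z hz).continuousAt.continuousWithinAt).mul
        (h₀.continuous.continuousOn.div h₁.continuous.continuousOn hh₁)
      ).hasDerivAt_intervalIntegral hIopen hIconn h0I hx
  simp only [hH, hf, hw, hq, Phi]
  rw [(hasDerivAt_firstIntegralQuotient C (hasDerivAt_ev2_fst g₀ x y)
      (hasDerivAt_ev2_fst g₁ x y) (hIntA x hx) hJ hg₁).deriv,
    (hasDerivAt_firstIntegralQuotient C (hasDerivAt_ev2_snd g₀ x y)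
      (hasDerivAt_ev2_snd g₁ x y) (hasDerivAt_const y _)
      ((hasDerivAt_const y _).congr_deriv (mul_zero _).symm) hg₁).deriv,
    Pl, Ql, Afun, hfun]
  have hA₁x := hA₁ x hx
  have hh₁x := hh₁ x hx
  field_simp
  ring

/-- Theorem 10 (first-integral part) of the paper: `H = f/q`, with
`f = g₁ w − g₀ + g₁ Φ` for a nonzero solution `w(x) = C exp(−∫₀ˣ A)` of `w' + A w = 0`
and `q = g₁ exp(−∫₀ˣ A)`, is a first integral of `ẋ = Pₗ, ẏ = Qₗ` wherever `q ≠ 0`. -/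
theorem stmt_8
    (A₀ A₁ h₀ h₁ : Polynomial ℝ) (g₀ g₁ : MvPolynomial (Fin 2) ℝ)
    (I : Set ℝ) (hIopen : IsOpen I) (hIconn : I.OrdConnected) (h0I : (0:ℝ) ∈ I)
    (hA₁ : ∀ x ∈ I, A₁.eval x ≠ 0) (hh₁ : ∀ x ∈ I, h₁.eval x ≠ 0)
    (C : ℝ) (hC : C ≠ 0)
    (w : ℝ → ℝ)
    (hw : ∀ x, w x = C * Real.exp (-(∫ s in (0:ℝ)..x, Afun A₀ A₁ s)))
    (f : ℝ → ℝ → ℝ)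
    (hf : ∀ x y, f x y = ev2 g₁ x y * w x - ev2 g₀ x y + ev2 g₁ x y * Phi A₀ A₁ h₀ h₁ x)
    (q : ℝ → ℝ → ℝ)
    (hq : ∀ x y, q x y = ev2 g₁ x y * Real.exp (-(∫ s in (0:ℝ)..x, Afun A₀ A₁ s)))
    (H : ℝ → ℝ → ℝ)
    (hH : ∀ x y, H x y = f x y / q x y) :
    ∀ x ∈ I, ∀ y : ℝ, q x y ≠ 0 →
      Pl A₁ h₁ g₀ g₁ x y * deriv (fun t => H t y) x
        + Ql A₀ A₁ h₀ h₁ g₀ g₁ x y * deriv (fun t => H x t) y = 0 :=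
  stmt_8_general A₀ A₁ h₀ h₁ g₀ g₁ I hIopen hIconn h0I hA₁ hh₁ C w hw f hf q hq H hH
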